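/- Let A be an m×n complex matrix of rank r with singular value decomposition A = U₁Σ₁V₁*, and B an m×n complex matrix of rank s with singular value decomposition B = Ũ₁Σ̃₁Ṽ₁*, and let E = B − A. Then ‖B†EA†‖_F² = ‖Ṽ₁*V₁Σ₁⁻¹ − Σ̃₁⁻¹Ũ₁*U₁‖_F² and ‖A†EB†‖_F² = ‖Σ₁⁻¹U₁*Ũ₁ − V₁*Ṽ₁Σ̃₁⁻¹‖_F². -/

import Mathlib

open Matrix

/-- The square of the Frobenius norm of a complex matrix. -/
noncomputable def frobSq {α β : Type*} [Fintype α] [Fintype β] (M : Matrix α β ℂ) : ℝ :=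
  ∑ i, ∑ j, ‖M i j‖ ^ 2

/-- The spectral norm (ℓ²-operator norm) of a complex matrix. -/
noncomputable def spec {α β : Type*} [Fintype α] [Fintype β] [DecidableEq β]
    (M : Matrix α β ℂ) : ℝ :=
  ‖LinearMap.toContinuousLinearMap (Matrix.toEuclideanLin M)‖

/-- `X` is the Moore–Penrose inverse of `M` (the four Penrose equations). -/
def IsMoorePenrose {α β : Type*} [Fintype α] [Fintype β]
    (M : Matrix α β ℂ) (X : Matrix β α ℂ) : Prop :=
  M * X * M = M ∧ X * M * X = X ∧ (M * X)ᴴ = M * X ∧ (X * M)ᴴ = X * M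

/-!
Since `A† = V₁ Σ₁⁻¹ U₁*` and `B† = Ṽ₁ Σ̃₁⁻¹ Ũ₁*` with isometric `U₁, V₁, Ũ₁, Ṽ₁`, we get
`B†B = Ṽ₁ Ṽ₁*` and `A A† = U₁ U₁*`, hence
`B† E A† = B†B A† - B† A A† = Ṽ₁ (Ṽ₁* V₁ Σ₁⁻¹ - Σ̃₁⁻¹ Ũ₁* U₁) U₁*`.
The Frobenius norm is invariant under multiplication by isometries on either side, which gives
the first identity; the second is the first with the roles of `A` and `B` exchanged, `E` becoming
`-E`.
-/

lemma frobSq_eq_re_trace {α β : Type*} [Fintype α] [Fintype β] (M : Matrix α β ℂ) :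
    frobSq M = (Mᴴ * M).trace.re := by
  simp only [frobSq, trace, diag, mul_apply, conjTranspose_apply, Complex.re_sum]
  rw [Finset.sum_comm]
  exact Finset.sum_congr rfl fun i _ => Finset.sum_congr rfl fun j _ => by
    simp [Complex.conj_mul', ← Complex.ofReal_pow]

lemma frobSq_neg {α β : Type*} [Fintype α] [Fintype β] (M : Matrix α β ℂ) :
    frobSq (-M) = frobSq M := by
  simp [frobSq]

lemma frobSq_mul_mul_conjTranspose {α β γ δ : Type*} [Fintype α] [Fintype β] [Fintype γ]
    [Fintype δ] [DecidableEq β] [DecidableEq γ] {P : Matrix α β ℂ} {Q : Matrix δ γ ℂ}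
    (hP : Pᴴ * P = 1) (hQ : Qᴴ * Q = 1) (M : Matrix β γ ℂ) :
    frobSq (P * M * Qᴴ) = frobSq M := by
  rw [frobSq_eq_re_trace, frobSq_eq_re_trace, conjTranspose_mul, conjTranspose_mul,
    conjTranspose_conjTranspose]
  calc (Q * (Mᴴ * Pᴴ) * (P * M * Qᴴ)).trace.re
      = (Q * (Mᴴ * (Pᴴ * P) * M) * Qᴴ).trace.re := by simp only [Matrix.mul_assoc]
    _ = (Qᴴ * Q * (Mᴴ * M)).trace.re := by
        rw [hP, Matrix.mul_one, trace_mul_comm, Matrix.mul_assoc]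
    _ = (Mᴴ * M).trace.re := by rw [hQ, Matrix.one_mul]

namespace Matrix

variable {R : Type*}

lemma conjTranspose_mul_self_eq_one_of_fromCols [Semiring R] [Star R] {a b c : Type*}
    [Fintype a] [DecidableEq b] [DecidableEq c] [Fintype b] [Fintype c]
    {W₁ : Matrix a b R} {W₂ : Matrix a c R}
    (h : (fromCols W₁ W₂)ᴴ * fromCols W₁ W₂ = 1) : W₁ᴴ * W₁ = 1 := by
  rw [conjTranspose_fromCols_eq_fromRows_conjTranspose, fromRows_mul_fromCols,
    ← fromBlocks_one] at h
  simpa only [toBlocks_fromBlocks₁₁] using congrArg toBlocks₁₁ h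

lemma diagonal_mul_diagonal_inv [DivisionRing R] {ι : Type*} [Fintype ι] [DecidableEq ι]
    {d : ι → R} (hd : ∀ i, d i ≠ 0) : diagonal d * diagonal (fun i => (d i)⁻¹) = 1 := by
  rw [diagonal_mul_diagonal, ← diagonal_one]
  exact congrArg diagonal (funext fun i => mul_inv_cancel₀ (hd i))

lemma diagonal_inv_mul_diagonal [DivisionRing R] {ι : Type*} [Fintype ι] [DecidableEq ι]
    {d : ι → R} (hd : ∀ i, d i ≠ 0) : diagonal (fun i => (d i)⁻¹) * diagonal d = 1 := by
  rw [diagonal_mul_diagonal, ← diagonal_one]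
  exact congrArg diagonal (funext fun i => inv_mul_cancel₀ (hd i))

lemma pinv_mul_sub_mul_pinv_of_svd [Ring R] [Star R] {m n r s : Type*}
    [Fintype m] [Fintype n] [Fintype r] [Fintype s] [DecidableEq r] [DecidableEq s]
    {U : Matrix m r R} {V : Matrix n r R} {tU : Matrix m s R} {tV : Matrix n s R}
    {S S' : Matrix r r R} {T T' : Matrix s s R}
    (hV : Vᴴ * V = 1) (htU : tUᴴ * tU = 1) (hS : S * S' = 1) (hT : T' * T = 1) :
    tV * T' * tUᴴ * (tU * T * tVᴴ - U * S * Vᴴ) * (V * S' * Uᴴ)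
      = tV * (tVᴴ * V * S' - T' * tUᴴ * U) * Uᴴ := by
  have hBB : tV * T' * tUᴴ * (tU * T * tVᴴ) = tV * tVᴴ := by
    simp only [Matrix.mul_assoc]
    rw [← Matrix.mul_assoc tUᴴ, htU, Matrix.one_mul, ← Matrix.mul_assoc T', hT, Matrix.one_mul]
  have hAA : U * S * Vᴴ * (V * S' * Uᴴ) = U * Uᴴ := by
    simp only [Matrix.mul_assoc]
    rw [← Matrix.mul_assoc Vᴴ, hV, Matrix.one_mul, ← Matrix.mul_assoc S, hS, Matrix.one_mul]
  rw [Matrix.mul_sub, Matrix.sub_mul, hBB, Matrix.mul_assoc _ (U * S * Vᴴ), hAA]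
  simp only [Matrix.mul_sub, Matrix.sub_mul, Matrix.mul_assoc]

end Matrix

theorem stmt19_general {m n r s : ℕ}
    (A B : Matrix (Fin m) (Fin n) ℂ)
    (σ : Fin r → ℝ) (hσpos : ∀ i, 0 < σ i)
    (τ : Fin s → ℝ) (hτpos : ∀ i, 0 < τ i)
    (U₁ : Matrix (Fin m) (Fin r) ℂ) (U₂ : Matrix (Fin m) (Fin (m - r)) ℂ)
    (V₁ : Matrix (Fin n) (Fin r) ℂ) (V₂ : Matrix (Fin n) (Fin (n - r)) ℂ)
    (tU₁ : Matrix (Fin m) (Fin s) ℂ) (tU₂ : Matrix (Fin m) (Fin (m - s)) ℂ)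
    (tV₁ : Matrix (Fin n) (Fin s) ℂ) (tV₂ : Matrix (Fin n) (Fin (n - s)) ℂ)
    (hU : (fromCols U₁ U₂)ᴴ * fromCols U₁ U₂ = 1
        ∧ fromCols U₁ U₂ * (fromCols U₁ U₂)ᴴ = 1)
    (hV : (fromCols V₁ V₂)ᴴ * fromCols V₁ V₂ = 1
        ∧ fromCols V₁ V₂ * (fromCols V₁ V₂)ᴴ = 1)
    (htU : (fromCols tU₁ tU₂)ᴴ * fromCols tU₁ tU₂ = 1
        ∧ fromCols tU₁ tU₂ * (fromCols tU₁ tU₂)ᴴ = 1)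
    (htV : (fromCols tV₁ tV₂)ᴴ * fromCols tV₁ tV₂ = 1
        ∧ fromCols tV₁ tV₂ * (fromCols tV₁ tV₂)ᴴ = 1)
    (hAsvd : A = U₁ * diagonal (fun i => (σ i : ℂ)) * V₁ᴴ)
    (hBsvd : B = tU₁ * diagonal (fun i => (τ i : ℂ)) * tV₁ᴴ)
    (E : Matrix (Fin m) (Fin n) ℂ) (hE : E = B - A)
    (Adag Bdag : Matrix (Fin n) (Fin m) ℂ)
    (hAdag : Adag = V₁ * diagonal (fun i => ((σ i : ℂ))⁻¹) * U₁ᴴ)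
    (hBdag : Bdag = tV₁ * diagonal (fun i => ((τ i : ℂ))⁻¹) * tU₁ᴴ) :
    frobSq (Bdag * E * Adag)
        = frobSq (tV₁ᴴ * V₁ * diagonal (fun i => ((σ i : ℂ))⁻¹)
            - diagonal (fun i => ((τ i : ℂ))⁻¹) * tU₁ᴴ * U₁)
    ∧ frobSq (Adag * E * Bdag)
        = frobSq (diagonal (fun i => ((σ i : ℂ))⁻¹) * U₁ᴴ * tU₁
            - V₁ᴴ * tV₁ * diagonal (fun i => ((τ i : ℂ))⁻¹)) := by
  have hU₁ := conjTranspose_mul_self_eq_one_of_fromCols hU.1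
  have hV₁ := conjTranspose_mul_self_eq_one_of_fromCols hV.1
  have htU₁ := conjTranspose_mul_self_eq_one_of_fromCols htU.1
  have htV₁ := conjTranspose_mul_self_eq_one_of_fromCols htV.1
  have hσ : ∀ i, (σ i : ℂ) ≠ 0 := fun i => Complex.ofReal_ne_zero.2 (hσpos i).ne'
  have hτ : ∀ i, (τ i : ℂ) ≠ 0 := fun i => Complex.ofReal_ne_zero.2 (hτpos i).ne'
  subst hE hAdag hBdag hAsvd hBsvd
  constructor
  · rw [pinv_mul_sub_mul_pinv_of_svd hV₁ htU₁ (diagonal_mul_diagonal_inv hσ)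
      (diagonal_inv_mul_diagonal hτ), frobSq_mul_mul_conjTranspose htV₁ hU₁]
  · rw [← neg_sub, Matrix.mul_neg, Matrix.neg_mul, frobSq_neg,
      pinv_mul_sub_mul_pinv_of_svd htV₁ hU₁ (diagonal_mul_diagonal_inv hτ)
        (diagonal_inv_mul_diagonal hσ), frobSq_mul_mul_conjTranspose hV₁ htU₁,
      ← frobSq_neg, neg_sub]

theorem stmt19 {m n r s : ℕ}
    (A B : Matrix (Fin m) (Fin n) ℂ)
    (hrankA : A.rank = r) (hrankB : B.rank = s)
    (σ : Fin r → ℝ) (hσmono : Antitone σ) (hσpos : ∀ i, 0 < σ i)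
    (τ : Fin s → ℝ) (hτmono : Antitone τ) (hτpos : ∀ i, 0 < τ i)
    (U₁ : Matrix (Fin m) (Fin r) ℂ) (U₂ : Matrix (Fin m) (Fin (m - r)) ℂ)
    (V₁ : Matrix (Fin n) (Fin r) ℂ) (V₂ : Matrix (Fin n) (Fin (n - r)) ℂ)
    (tU₁ : Matrix (Fin m) (Fin s) ℂ) (tU₂ : Matrix (Fin m) (Fin (m - s)) ℂ)
    (tV₁ : Matrix (Fin n) (Fin s) ℂ) (tV₂ : Matrix (Fin n) (Fin (n - s)) ℂ)
    (hU : (fromCols U₁ U₂)ᴴ * fromCols U₁ U₂ = 1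
        ∧ fromCols U₁ U₂ * (fromCols U₁ U₂)ᴴ = 1)
    (hV : (fromCols V₁ V₂)ᴴ * fromCols V₁ V₂ = 1
        ∧ fromCols V₁ V₂ * (fromCols V₁ V₂)ᴴ = 1)
    (htU : (fromCols tU₁ tU₂)ᴴ * fromCols tU₁ tU₂ = 1
        ∧ fromCols tU₁ tU₂ * (fromCols tU₁ tU₂)ᴴ = 1)
    (htV : (fromCols tV₁ tV₂)ᴴ * fromCols tV₁ tV₂ = 1
        ∧ fromCols tV₁ tV₂ * (fromCols tV₁ tV₂)ᴴ = 1)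
    (hAsvd : A = U₁ * diagonal (fun i => (σ i : ℂ)) * V₁ᴴ)
    (hBsvd : B = tU₁ * diagonal (fun i => (τ i : ℂ)) * tV₁ᴴ)
    (E : Matrix (Fin m) (Fin n) ℂ) (hE : E = B - A)
    (Adag Bdag : Matrix (Fin n) (Fin m) ℂ)
    (hAdag : Adag = V₁ * diagonal (fun i => ((σ i : ℂ))⁻¹) * U₁ᴴ)
    (hBdag : Bdag = tV₁ * diagonal (fun i => ((τ i : ℂ))⁻¹) * tU₁ᴴ) :
    frobSq (Bdag * E * Adag)
        = frobSq (tV₁ᴴ * V₁ * diagonal (fun i => ((σ i : ℂ))⁻¹)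
            - diagonal (fun i => ((τ i : ℂ))⁻¹) * tU₁ᴴ * U₁)
    ∧ frobSq (Adag * E * Bdag)
        = frobSq (diagonal (fun i => ((σ i : ℂ))⁻¹) * U₁ᴴ * tU₁
            - V₁ᴴ * tV₁ * diagonal (fun i => ((τ i : ℂ))⁻¹)) :=
  stmt19_general A B σ hσpos τ hτpos U₁ U₂ V₁ V₂ tU₁ tU₂ tV₁ tV₂ hU hV htU htV hAsvd hBsvd E hE Adag
    Bdag hAdag hBdag
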